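/- arXiv:1611.06546 — 3 statements merged into one kernel-verified Lean document; each statement's English description precedes it below -/
import Mathlib

section
/- A finite group G is an elementary abelian 2-group if and only if the set of maximal sum-free sets in G coincides with the set of complements of the maximal subgroups of G, and the Frattini subgroup of G is trivial. -/
/-- A subset `S` of a group is sum-free if for all `s₁, s₂ ∈ S`, `s₁ * s₂ ∉ S`. -/
def SumFree {G : Type*} [Group G] (S : Set G) : Prop :=
  ∀ a ∈ S, ∀ b ∈ S, a * b ∉ S

/-- A maximal sum-free set: a (nonempty) sum-free set of maximum cardinality
among all sum-free subsets. -/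
def IsMaxSumFree {G : Type*} [Group G] (S : Set G) : Prop :=
  S.Nonempty ∧ SumFree S ∧ ∀ T : Set G, SumFree T → T.ncard ≤ S.ncard

/-!
A sum-free set `S` misses its translate `a S` for `a ∈ S`, so `2 |S| ≤ |G|`.

If every element has order dividing two, `G` is abelian and `H ⊔ ⟨x⟩ = H ∪ x H`. Hence two
elements outside a maximal subgroup `M` multiply into `M`: `Mᶜ` is sum-free of size `|G|/2`, and a
subgroup maximal among those avoiding a given `g ≠ 1` is maximal, so the Frattini subgroup is
trivial. A maximal sum-free set then also has size `|G|/2`; in any finite group such a set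
`S` satisfies `s S = S s = Sᶜ` for `s ∈ S`, which forces `S = S⁻¹` and makes `Sᶜ` a maximal
subgroup.

Conversely, if the complements of maximal subgroups are sum-free, then `g² ∈ M` for every `g` and
every maximal `M`, so a trivial Frattini subgroup gives `g² = 1`.
-/

section

variable {G : Type*} [Group G]

theorem Set.ncard_le_ncard_compl_of_forall_mul_notMem [Finite G] {S : Set G} {a : G}
    (h : ∀ s ∈ S, a * s ∉ S) : S.ncard ≤ Sᶜ.ncard := by
  rw [← Set.ncard_image_of_injective S (mul_right_injective a)]
  exact Set.ncard_le_ncard (Set.image_subset_iff.2 h)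

theorem Subgroup.card_le_two_mul_ncard_compl [Finite G] {M : Subgroup G} (hM : M ≠ ⊤) :
    Nat.card G ≤ 2 * (M : Set G)ᶜ.ncard := by
  obtain ⟨a, ha⟩ := SetLike.exists_not_mem_of_ne_top M hM
  have := Set.ncard_le_ncard_compl_of_forall_mul_notMem (S := (M : Set G)) fun m hm ham =>
    ha (by simpa using M.mul_mem ham (M.inv_mem hm))
  have := Set.ncard_add_ncard_compl (M : Set G)
  omega

namespace SumFree

variable {S : Set G}

theorem one_notMem (hS : SumFree S) : (1 : G) ∉ S :=
  fun h => hS 1 h 1 h (by rwa [one_mul])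

theorem two_mul_ncard_le [Finite G] (hS : SumFree S) : 2 * S.ncard ≤ Nat.card G := by
  rcases S.eq_empty_or_nonempty with rfl | ⟨a, ha⟩
  · simp
  · have := Set.ncard_le_ncard_compl_of_forall_mul_notMem (hS a ha)
    have := Set.ncard_add_ncard_compl S
    omega

variable [Finite G]

theorem image_mul_left_eq_compl (hS : SumFree S) (hcard : 2 * S.ncard = Nat.card G) {a : G}
    (ha : a ∈ S) : (a * ·) '' S = Sᶜ := by
  refine Set.eq_of_subset_of_ncard_le (Set.image_subset_iff.2 (hS a ha)) ?_
  have := Set.ncard_add_ncard_compl S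
  rw [Set.ncard_image_of_injective S (mul_right_injective a)]
  omega

theorem image_mul_right_eq_compl (hS : SumFree S) (hcard : 2 * S.ncard = Nat.card G) {a : G}
    (ha : a ∈ S) : (· * a) '' S = Sᶜ := by
  refine Set.eq_of_subset_of_ncard_le (Set.image_subset_iff.2 fun s hs => hS s hs a ha) ?_
  have := Set.ncard_add_ncard_compl S
  rw [Set.ncard_image_of_injective S (mul_left_injective a)]
  omega

theorem inv_mem (hS : SumFree S) (hcard : 2 * S.ncard = Nat.card G) {a : G} (ha : a ∈ S) :
    a⁻¹ ∈ S := by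
  have : (1 : G) ∈ (a * ·) '' S := by
    rw [hS.image_mul_left_eq_compl hcard ha]
    exact hS.one_notMem
  obtain ⟨b, hb, hab⟩ := this
  rwa [← eq_inv_of_mul_eq_one_right hab]

def complSubgroup (hS : SumFree S) (hcard : 2 * S.ncard = Nat.card G) : Subgroup G where
  carrier := Sᶜ
  one_mem' := hS.one_notMem
  inv_mem' {x} hx hx' := hx (inv_inv x ▸ hS.inv_mem hcard hx')
  mul_mem' {x y} hx hy hxy := by
    rw [← hS.image_mul_right_eq_compl hcard hxy] at hx
    rw [← hS.image_mul_left_eq_compl hcard (hS.inv_mem hcard hxy)] at hy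
    obtain ⟨u, hu, hux⟩ := hx
    obtain ⟨v, hv, hvy⟩ := hy
    have : u * v = x * y := by
      rw [eq_mul_inv_of_mul_eq hux, eq_inv_mul_of_mul_eq hvy]
      group
    exact hS u hu v hv (this ▸ hxy)

theorem isCoatom_complSubgroup (hS : SumFree S) (hcard : 2 * S.ncard = Nat.card G) :
    IsCoatom (hS.complSubgroup hcard) := by
  obtain ⟨a, ha⟩ : S.Nonempty := by
    rw [← Set.ncard_pos]
    have := Nat.card_pos (α := G)
    omega
  refine ⟨fun h => (h ▸ Subgroup.mem_top a : a ∈ hS.complSubgroup hcard) ha, fun K hK => ?_⟩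
  obtain ⟨s, hsK, hs⟩ := SetLike.exists_of_lt hK
  have hsS : s ∈ S := not_not.1 hs
  refine (Subgroup.eq_top_iff' K).2 fun t => ?_
  by_cases htS : t ∈ S
  · have : s⁻¹ * t ∈ hS.complSubgroup hcard := hS _ (hS.inv_mem hcard hsS) t htS
    simpa using K.mul_mem hsK (hK.le this)
  · exact hK.le htS

theorem exists_isCoatom_eq_compl (hS : SumFree S) (hcard : 2 * S.ncard = Nat.card G) :
    ∃ M : Subgroup G, IsCoatom M ∧ S = (M : Set G)ᶜ :=
  ⟨_, hS.isCoatom_complSubgroup hcard, (compl_compl S).symm⟩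

end SumFree

section OrderDvdTwo

variable (h2 : ∀ g : G, orderOf g ∣ 2)
include h2

theorem mul_self_eq_one_of_orderOf_dvd_two (g : G) : g * g = 1 := by
  rw [← pow_two, ← orderOf_dvd_iff_pow_eq_one]
  exact h2 g

theorem Subgroup.mem_sup_zpowers_iff_of_orderOf_dvd_two {H : Subgroup G} {x y : G} :
    y ∈ H ⊔ Subgroup.zpowers x ↔ y ∈ H ∨ x * y ∈ H := by
  have hxx := mul_self_eq_one_of_orderOf_dvd_two h2 x
  have : (Subgroup.zpowers x).Normal :=
    ⟨fun n _ g => by rwa [(Commute.of_orderOf_dvd_two h2 g n).eq, mul_inv_cancel_right]⟩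
  constructor
  · rw [Subgroup.mem_sup_of_normal_right]
    rintro ⟨h, hh, z, hz, rfl⟩
    obtain ⟨k, rfl⟩ := Subgroup.mem_zpowers_iff.1 hz
    rw [zpow_eq_zpow_emod k (n := 2) (by rw [zpow_two, hxx])]
    rcases Int.emod_two_eq_zero_or_one k with hk | hk <;> rw [hk]
    · simpa using Or.inl hh
    · right
      rwa [zpow_one, ← mul_assoc, (Commute.of_orderOf_dvd_two h2 x h).eq, mul_assoc, hxx,
        mul_one]
  · rintro (hy | hxy)
    · exact Subgroup.mem_sup_left hy
    · have : x * (x * y) = y := by rw [← mul_assoc, hxx, one_mul]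
      exact this ▸ mul_mem (Subgroup.mem_sup_right (Subgroup.mem_zpowers x))
        (Subgroup.mem_sup_left hxy)

theorem IsCoatom.mul_mem_of_notMem_of_orderOf_dvd_two {M : Subgroup G} (hM : IsCoatom M)
    {a b : G} (ha : a ∉ M) (hb : b ∉ M) : a * b ∈ M := by
  have hsup : M ⊔ Subgroup.zpowers a = ⊤ :=
    hM.2 _ (SetLike.lt_iff_le_and_exists.2
      ⟨le_sup_left, a, Subgroup.mem_sup_right (Subgroup.mem_zpowers a), ha⟩)
  have hb' : b ∈ M ⊔ Subgroup.zpowers a := hsup ▸ Subgroup.mem_top b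
  exact ((Subgroup.mem_sup_zpowers_iff_of_orderOf_dvd_two h2).1 hb').resolve_left hb

theorem IsCoatom.sumFree_compl_of_orderOf_dvd_two {M : Subgroup G} (hM : IsCoatom M) :
    SumFree (M : Set G)ᶜ :=
  fun _ ha _ hb hab => hab (hM.mul_mem_of_notMem_of_orderOf_dvd_two h2 ha hb)

variable [Finite G]

theorem IsCoatom.isMaxSumFree_compl_of_orderOf_dvd_two {M : Subgroup G} (hM : IsCoatom M) :
    IsMaxSumFree (M : Set G)ᶜ := by
  refine ⟨SetLike.exists_not_mem_of_ne_top M hM.1, hM.sumFree_compl_of_orderOf_dvd_two h2,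
    fun T hT => ?_⟩
  have := hT.two_mul_ncard_le
  have := Subgroup.card_le_two_mul_ncard_compl hM.1
  omega

theorem exists_isCoatom_notMem_of_orderOf_dvd_two {g : G} (hg : g ≠ 1) :
    ∃ M : Subgroup G, IsCoatom M ∧ g ∉ M := by
  obtain ⟨H, hH⟩ := (Set.toFinite {K : Subgroup G | g ∉ K}).exists_maximal
    ⟨⊥, fun h => hg (Subgroup.mem_bot.1 h)⟩
  have hgH : g ∉ H := hH.prop
  have hmul : ∀ y ∉ H, y * g ∈ H := fun y hy => by
    have hlt : H < H ⊔ Subgroup.zpowers y := SetLike.lt_iff_le_and_exists.2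
      ⟨le_sup_left, y, Subgroup.mem_sup_right (Subgroup.mem_zpowers y), hy⟩
    have hg : g ∈ H ⊔ Subgroup.zpowers y := not_not.1 (hH.not_prop_of_gt hlt)
    exact ((Subgroup.mem_sup_zpowers_iff_of_orderOf_dvd_two h2).1 hg).resolve_left hgH
  refine ⟨H, ⟨fun h => hgH (h ▸ Subgroup.mem_top g), fun K hK => ?_⟩, hgH⟩
  have hgK : g ∈ K := not_not.1 (hH.not_prop_of_gt hK)
  refine (Subgroup.eq_top_iff' K).2 fun y => ?_
  by_cases hy : y ∈ H
  · exact hK.le hy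
  · simpa [mul_assoc, mul_self_eq_one_of_orderOf_dvd_two h2 g] using
      K.mul_mem (hK.le (hmul y hy)) hgK

theorem frattini_eq_bot_of_orderOf_dvd_two : frattini G = ⊥ := by
  refine (Subgroup.eq_bot_iff_forall _).2 fun g hg => ?_
  by_contra hg1
  obtain ⟨M, hM, hgM⟩ := exists_isCoatom_notMem_of_orderOf_dvd_two h2 hg1
  exact hgM (frattini_le_coatom hM hg)

theorem IsMaxSumFree.exists_isCoatom_eq_compl_of_orderOf_dvd_two {S : Set G}
    (hS : IsMaxSumFree S) : ∃ M : Subgroup G, IsCoatom M ∧ S = (M : Set G)ᶜ := by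
  obtain ⟨⟨a, ha⟩, hSF, hmax⟩ := hS
  obtain ⟨M, hM, -⟩ := exists_isCoatom_notMem_of_orderOf_dvd_two h2
    (ne_of_mem_of_not_mem ha hSF.one_notMem)
  refine hSF.exists_isCoatom_eq_compl (le_antisymm hSF.two_mul_ncard_le ?_)
  have := hmax _ (hM.sumFree_compl_of_orderOf_dvd_two h2)
  have := Subgroup.card_le_two_mul_ncard_compl hM.1
  omega

end OrderDvdTwo

theorem mul_self_mem_frattini (h : ∀ M : Subgroup G, IsCoatom M → SumFree (M : Set G)ᶜ)
    (g : G) : g * g ∈ frattini G := by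
  simp only [frattini, Order.radical, Subgroup.mem_iInf]
  intro M hM
  by_cases hg : g ∈ M
  · exact M.mul_mem hg hg
  · exact not_not.1 (h M hM g hg g hg)

end

theorem elementary_abelian_two_characterisation (G : Type*) [Group G] [Finite G] :
    (∀ g : G, g ≠ 1 → orderOf g = 2) ↔
      ({S : Set G | IsMaxSumFree S} =
          {S : Set G | ∃ M : Subgroup G, IsCoatom M ∧ S = (↑M : Set G)ᶜ} ∧
        (⨅ M ∈ {M : Subgroup G | IsCoatom M}, M) = ⊥) := by
  change _ ↔ _ ∧ frattini G = ⊥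
  constructor
  · intro h
    have h2 : ∀ g : G, orderOf g ∣ 2 := fun g => by
      rcases eq_or_ne g 1 with rfl | hg
      · simp
      · rw [h g hg]
    refine ⟨Set.ext fun S => ⟨?_, ?_⟩, frattini_eq_bot_of_orderOf_dvd_two h2⟩
    · exact fun hS => hS.exists_isCoatom_eq_compl_of_orderOf_dvd_two h2
    · rintro ⟨M, hM, rfl⟩
      exact hM.isMaxSumFree_compl_of_orderOf_dvd_two h2
  · rintro ⟨hmax, hfrattini⟩ g hg
    have hsf : ∀ M : Subgroup G, IsCoatom M → SumFree (M : Set G)ᶜ := fun M hM =>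
      (hmax ▸ ⟨M, hM, rfl⟩ : (M : Set G)ᶜ ∈ {S : Set G | IsMaxSumFree S}).2.1
    have hgg := mul_self_mem_frattini hsf g
    rw [hfrattini, Subgroup.mem_bot, ← pow_two] at hgg
    exact orderOf_eq_prime hgg hg
end

section
/- If S is a maximal sum-free set in the elementary abelian 3-group G = (ℤ/3ℤ)^n (n ≥ 1), then G = S ∪ SS⁻¹ ∪ S⁻¹, where SS⁻¹ = {xy⁻¹ : x, y ∈ S} and S⁻¹ = {x⁻¹ : x ∈ S}. -/
open Pointwise

/-- A subset `S` of an additive group is sum-free if for all `s₁, s₂ ∈ S`, `s₁ + s₂ ∉ S`. -/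
def AddSumFree {G : Type*} [AddGroup G] (S : Set G) : Prop :=
  ∀ a ∈ S, ∀ b ∈ S, a + b ∉ S

/-- A maximal sum-free set: a (nonempty) sum-free set of maximum cardinality
among all sum-free subsets. -/
def IsMaxAddSumFree {G : Type*} [AddGroup G] (S : Set G) : Prop :=
  S.Nonempty ∧ AddSumFree S ∧ ∀ T : Set G, AddSumFree T → T.ncard ≤ S.ncard

/-!
If `x` lies outside `S ∪ (S - S) ∪ (-S)`, then `S`, `x + S` and `-x + S` are pairwise disjoint
(in exponent 3 the difference of the last two shifts is `-2x = x`) and none of them contains `0`,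
so `3 |S| < 3ⁿ`. But the coset `{v | v 0 = 1}` of a hyperplane is sum-free of size `3ⁿ⁻¹`,
so a maximal sum-free set has `3 |S| ≥ 3ⁿ`.
-/

section

variable {G H : Type*}

theorem AddSumFree.zero_notMem [AddGroup G] {S : Set G} (hS : AddSumFree S) : (0 : G) ∉ S :=
  fun h => hS 0 h 0 h (by simpa using h)

theorem addSumFree_singleton [AddGroup G] {a : G} (ha : a ≠ 0) : AddSumFree ({a} : Set G) := by
  rintro _ rfl _ rfl h
  exact ha (by simpa using h)

theorem AddSumFree.preimage [AddGroup G] [AddGroup H] (f : G →+ H) {T : Set H}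
    (hT : AddSumFree T) : AddSumFree (f ⁻¹' T) :=
  fun a ha b hb hab => hT _ ha _ hb (by simpa using hab)

theorem AddMonoidHom.card_mul_ncard_preimage_singleton [AddGroup G] [Finite G] [AddGroup H]
    {f : G →+ H} (hf : Function.Surjective f) (y : H) :
    Nat.card H * (f ⁻¹' {y}).ncard = Nat.card G := by
  classical
  have : Fintype G := Fintype.ofFinite G
  have : Fintype H := @Fintype.ofFinite H (Finite.of_surjective f hf)
  have hfiber (z : H) : (Finset.univ.filter fun g => f g = z).card = (f ⁻¹' {y}).ncard := by
    rw [AddMonoidHom.card_fiber_eq_of_mem_range f (hf z) (hf y), ← Set.ncard_coe_finset]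
    congr 1
    ext
    simp
  rw [Nat.card_eq_fintype_card, Nat.card_eq_fintype_card, ← Finset.card_univ (α := G),
    Finset.card_eq_sum_card_fiberwise (f := f) (t := Finset.univ) (fun _ _ => Finset.mem_univ _)]
  simp [hfiber]

theorem disjoint_vadd_set_of_sub_notMem_sub [AddCommGroup G] {S : Set G} {a b : G}
    (h : a - b ∉ S - S) : Disjoint (a +ᵥ S) (b +ᵥ S) := by
  rw [Set.disjoint_left]
  rintro _ ⟨s, hs, rfl⟩ ⟨t, ht, hst⟩
  simp only [vadd_eq_add] at hst
  exact h ⟨t, ht, s, hs, by rw [sub_eq_sub_iff_add_eq_add, add_comm, hst]⟩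

theorem AddSumFree.three_mul_ncard_lt_card [AddCommGroup G] [Finite G]
    (h3 : ∀ x : G, 3 • x = 0) {S : Set G} (hS : AddSumFree S) {x : G}
    (hx : x ∉ S ∪ (S - S) ∪ -S) : 3 * S.ncard < Nat.card G := by
  simp only [Set.mem_union, Set.mem_neg, not_or] at hx
  obtain ⟨⟨hxS, hxSS⟩, hxnegS⟩ := hx
  have hneg_sub : -x - x = x := by
    have := h3 x
    rw [succ_nsmul, two_nsmul] at this
    linear_combination (norm := abel) -this
  have hS0 : (0 : G) +ᵥ S = S := zero_vadd G S
  have hd₁ : Disjoint S (x +ᵥ S) := by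
    simpa [hS0] using (disjoint_vadd_set_of_sub_notMem_sub (S := S) (a := x) (b := 0)
      (by simpa using hxSS)).symm
  have hd₂ : Disjoint S (-x +ᵥ S) := by
    simpa [hS0] using disjoint_vadd_set_of_sub_notMem_sub (S := S) (a := 0) (b := -x)
      (by simpa using hxSS)
  have hd₃ : Disjoint (x +ᵥ S) (-x +ᵥ S) :=
    (disjoint_vadd_set_of_sub_notMem_sub (S := S) (a := -x) (b := x) (by rwa [hneg_sub])).symm
  have h0 : (0 : G) ∉ S ∪ (x +ᵥ S) ∪ (-x +ᵥ S) := by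
    simp [Set.mem_vadd_set_iff_neg_vadd_mem, hS.zero_notMem, hxS, hxnegS]
  calc 3 * S.ncard = (S ∪ (x +ᵥ S) ∪ (-x +ᵥ S)).ncard := by
        rw [Set.ncard_union_eq (Set.disjoint_union_left.2 ⟨hd₂, hd₃⟩),
          Set.ncard_union_eq hd₁, Set.ncard_vadd_set, Set.ncard_vadd_set]
        ring
    _ < (Set.univ : Set G).ncard :=
        Set.ncard_lt_ncard (Set.ssubset_univ_iff.2 fun h => h0 (h ▸ Set.mem_univ 0))
    _ = Nat.card G := Set.ncard_univ G

theorem IsMaxAddSumFree.card_le_card_mul_ncard [AddGroup G] [Finite G] [AddGroup H] [Nontrivial H] {S : Set G} (hS : IsMaxAddSumFree S) {f : G →+ H}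
    (hf : Function.Surjective f) : Nat.card G ≤ Nat.card H * S.ncard := by
  obtain ⟨a, ha⟩ := exists_ne (0 : H)
  rw [← f.card_mul_ncard_preimage_singleton hf a]
  exact Nat.mul_le_mul_left _ (hS.2.2 _ ((addSumFree_singleton ha).preimage f))

end

/-- If `S` is a maximal sum-free set in `(ℤ/3ℤ)^n`, then `G = S ∪ (S - S) ∪ (-S)`. -/
theorem maxSumFree_diff_neg_cover (n : ℕ) (hn : 1 ≤ n) (S : Set (Fin n → ZMod 3))
    (hS : IsMaxAddSumFree S) :
    S ∪ (S - S) ∪ (-S) = Set.univ := by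
  refine Set.eq_univ_of_forall fun x => by_contra fun hx => ?_
  have h3 (v : Fin n → ZMod 3) : 3 • v = 0 :=
    funext fun i => by simp [nsmul_eq_mul, show (3 : ZMod 3) = 0 from rfl]
  have hlt := hS.2.1.three_mul_ncard_lt_card h3 hx
  have hle := hS.card_le_card_mul_ncard (f := Pi.evalAddMonoidHom (fun _ => ZMod 3) ⟨0, hn⟩)
    (Function.surjective_eval _)
  rw [Nat.card_zmod] at hle
  omega
end

section
/- If S is a maximal sum-free set in the elementary abelian 3-group G = (ℤ/3ℤ)^n (n ≥ 1) and x ∈ S, then the set H = x⁻¹S = {x⁻¹s : s ∈ S} is a subgroup of G of index 3, and S = xH is a non-trivial coset of H. -/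
open Pointwise

/-!
For `s ∈ S` the translates `S`, `s + S` and `-s + S` of a sum-free set in a group of exponent 3
are pairwise disjoint, so `3 |S| ≤ |G|`; in `(ℤ/3ℤ)ⁿ` the bound is attained by the hyperplane
`{v | v 0 = 1}`, so for a maximal `S` the three translates cover `G` for every `s ∈ S`.
If neither `r` nor `-r` lies in `S`, this forces `r + S ⊆ S`: otherwise `r - s` and `-r - s`
would both lie in `S`, and their sum is `-2s = s`. Every element of `-x + S` is such an `r`,
which makes `-x + S` closed under addition and negation; counting gives index 3.
-/

theorem add_self_eq_neg_of_three_nsmul {G : Type*} [AddGroup G] {g : G} (h : 3 • g = 0) :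
    g + g = -g :=
  eq_neg_of_add_eq_zero_left (by rwa [three_nsmul, ← add_assoc] at h)

theorem three_mul_ncard_preimage_one {G : Type*} [AddGroup G] [Finite G] (φ : G →+ ZMod 3)
    (hφ : Function.Surjective φ) : 3 * (φ ⁻¹' {1}).ncard = Nat.card G := by
  obtain ⟨a, ha⟩ := hφ 1
  have hfiber : φ ⁻¹' {1} = a +ᵥ (φ.ker : Set G) := by
    ext g
    simp only [Set.mem_preimage, Set.mem_singleton_iff, Set.mem_vadd_set_iff_neg_vadd_mem,
      vadd_eq_add, SetLike.mem_coe, AddMonoidHom.mem_ker, map_add, map_neg, ha, neg_add_eq_zero]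
    exact eq_comm
  rw [hfiber, Set.ncard_vadd_set, ← Nat.card_coe_set_eq, SetLike.coe_sort_coe,
    ← φ.ker.index_mul_card, AddSubgroup.index_ker φ, φ.range_eq_top_of_surjective hφ]
  simp

namespace AddSumFree

section AddGroup

variable {G : Type*} [AddGroup G] {S : Set G}

theorem preimage_one (φ : G →+ ZMod 3) : AddSumFree (φ ⁻¹' {1}) := by
  intro a ha b hb hab
  simp only [Set.mem_preimage, Set.mem_singleton_iff, map_add] at ha hb hab
  rw [ha, hb] at hab
  exact absurd hab (by decide)

theorem neg_notMem (hS : AddSumFree S) {a : G} (ha : a ∈ S) (h3 : 3 • a = 0) : -a ∉ S := by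
  rw [← add_self_eq_neg_of_three_nsmul h3]
  exact hS a ha a ha

theorem disjoint_vadd (hS : AddSumFree S) {s : G} (hs : s ∈ S) : Disjoint S (s +ᵥ S) :=
  Set.disjoint_left.mpr fun g hg hg' => by
    rw [Set.mem_vadd_set_iff_neg_vadd_mem, vadd_eq_add] at hg'
    exact hS s hs _ hg' (by rwa [add_neg_cancel_left])

theorem disjoint_neg_vadd (hS : AddSumFree S) {s : G} (hs : s ∈ S) : Disjoint S (-s +ᵥ S) :=
  Set.disjoint_left.mpr fun g hg hg' => by
    rw [Set.mem_vadd_set_iff_neg_vadd_mem, neg_neg, vadd_eq_add] at hg'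
    exact hS s hs g hg hg'

theorem notMem_and_neg_notMem_of_add_mem (hS : AddSumFree S) {x h : G} (hx : x ∈ S)
    (hxh : x + h ∈ S) : h ∉ S ∧ -h ∉ S :=
  ⟨fun hh => hS x hx h hh hxh, fun hh => hS _ hxh _ hh (by rwa [add_neg_cancel_right])⟩

end AddGroup

variable {G : Type*} [AddCommGroup G] {S : Set G}

theorem disjoint_vadd_neg_vadd (h3 : ∀ g : G, 3 • g = 0) (hS : AddSumFree S) {s : G}
    (hs : s ∈ S) : Disjoint (s +ᵥ S) (-s +ᵥ S) :=
  Set.disjoint_left.mpr fun g hg hg' => by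
    rw [Set.mem_vadd_set_iff_neg_vadd_mem, vadd_eq_add] at hg hg'
    rw [neg_neg] at hg'
    refine hS _ hg' s hs ?_
    rwa [add_comm s g, add_assoc, add_self_eq_neg_of_three_nsmul (h3 s), ← sub_eq_add_neg,
      ← neg_add_eq_sub]

theorem ncard_union_vadd_union_neg_vadd [Finite G] (h3 : ∀ g : G, 3 • g = 0)
    (hS : AddSumFree S) {s : G} (hs : s ∈ S) :
    (S ∪ (s +ᵥ S) ∪ (-s +ᵥ S)).ncard = 3 * S.ncard := by
  rw [Set.ncard_union_eq (Set.disjoint_union_left.mpr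
      ⟨hS.disjoint_neg_vadd hs, hS.disjoint_vadd_neg_vadd h3 hs⟩),
    Set.ncard_union_eq (hS.disjoint_vadd hs), Set.ncard_vadd_set, Set.ncard_vadd_set]
  ring

theorem three_mul_ncard_le [Finite G] (h3 : ∀ g : G, 3 • g = 0) (hS : AddSumFree S) {s : G}
    (hs : s ∈ S) : 3 * S.ncard ≤ Nat.card G :=
  hS.ncard_union_vadd_union_neg_vadd h3 hs ▸ Set.ncard_le_card _

theorem mem_or_sub_mem_or_add_mem [Finite G] (h3 : ∀ g : G, 3 • g = 0) (hS : AddSumFree S)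
    (hcard : 3 * S.ncard = Nat.card G) {s : G} (hs : s ∈ S) (g : G) :
    g ∈ S ∨ g - s ∈ S ∨ g + s ∈ S := by
  have hcover : S ∪ (s +ᵥ S) ∪ (-s +ᵥ S) = Set.univ :=
    Set.eq_of_subset_of_ncard_le (Set.subset_univ _)
      (by rw [Set.ncard_univ, hS.ncard_union_vadd_union_neg_vadd h3 hs, hcard])
  have hg : g ∈ S ∪ (s +ᵥ S) ∪ (-s +ᵥ S) := hcover ▸ Set.mem_univ g
  simp only [Set.mem_union, Set.mem_vadd_set_iff_neg_vadd_mem, vadd_eq_add, neg_neg,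
    neg_add_eq_sub] at hg
  rwa [add_comm s g, or_assoc] at hg

theorem add_mem_of_notMem_of_neg_notMem [Finite G] (h3 : ∀ g : G, 3 • g = 0)
    (hS : AddSumFree S) (hcard : 3 * S.ncard = Nat.card G) {r s : G} (hr : r ∉ S)
    (hr' : -r ∉ S) (hs : s ∈ S) : r + s ∈ S := by
  rcases hS.mem_or_sub_mem_or_add_mem h3 hcard hs r with hr_mem | hrs | hrs
  · exact absurd hr_mem hr
  · exfalso
    rcases hS.mem_or_sub_mem_or_add_mem h3 hcard hs (-r) with hr_mem | hrs' | hrs'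
    · exact hr' hr_mem
    · refine hS _ hrs _ hrs' ?_
      rwa [show r - s + (-r - s) = -(s + s) by abel, add_self_eq_neg_of_three_nsmul (h3 s),
        neg_neg]
    · exact hS.neg_notMem hrs (h3 _) (by rwa [neg_sub, ← neg_add_eq_sub])
  · exact hrs

theorem exists_addSubgroup_coe_eq_neg_vadd [Finite G] (h3 : ∀ g : G, 3 • g = 0)
    (hS : AddSumFree S) (hcard : 3 * S.ncard = Nat.card G) {x : G} (hx : x ∈ S) :
    ∃ H : AddSubgroup G, (H : Set G) = -x +ᵥ S := by
  refine ⟨{ carrier := -x +ᵥ S, zero_mem' := ?_, add_mem' := ?_, neg_mem' := ?_ }, rfl⟩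
  all_goals simp only [Set.mem_vadd_set_iff_neg_vadd_mem, neg_neg, vadd_eq_add]
  · intro h k hh hk
    have ⟨h_notMem, h_neg_notMem⟩ := hS.notMem_and_neg_notMem_of_add_mem hx hh
    rw [add_left_comm]
    exact hS.add_mem_of_notMem_of_neg_notMem h3 hcard h_notMem h_neg_notMem hk
  · rwa [add_zero]
  · intro h hh
    have ⟨h_notMem, h_neg_notMem⟩ := hS.notMem_and_neg_notMem_of_add_mem hx hh
    rw [add_comm]
    exact hS.add_mem_of_notMem_of_neg_notMem h3 hcard h_neg_notMem (by rwa [neg_neg]) hx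

theorem exists_addSubgroup_index_eq_three [Finite G] (h3 : ∀ g : G, 3 • g = 0)
    (hS : AddSumFree S) (hcard : 3 * S.ncard = Nat.card G) {x : G} (hx : x ∈ S) :
    ∃ H : AddSubgroup G, (H : Set G) = -x +ᵥ S ∧ H.index = 3 ∧ x ∉ H ∧
      S = x +ᵥ (H : Set G) := by
  obtain ⟨H, hH⟩ := hS.exists_addSubgroup_coe_eq_neg_vadd h3 hcard hx
  refine ⟨H, hH, ?_, ?_, by rw [hH, vadd_vadd, add_neg_cancel, zero_vadd]⟩
  · have hH_card : Nat.card H = S.ncard := by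
      rw [← SetLike.coe_sort_coe, Nat.card_coe_set_eq, hH, Set.ncard_vadd_set]
    refine Nat.eq_of_mul_eq_mul_right ((Set.ncard_pos).mpr ⟨x, hx⟩) ?_
    rw [← hH_card, H.index_mul_card, ← hcard, hH_card]
  · rw [← SetLike.mem_coe, hH, Set.mem_vadd_set_iff_neg_vadd_mem, neg_neg, vadd_eq_add]
    exact hS x hx x hx

end AddSumFree

/-- If `S` is a maximal sum-free set in `(ℤ/3ℤ)^n` and `x ∈ S`, then `-x + S` is a
subgroup of index 3, and `S` is a non-trivial coset of it. -/
theorem maxSumFree_is_coset_three (n : ℕ) (hn : 1 ≤ n) (S : Set (Fin n → ZMod 3))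
    (hS : IsMaxAddSumFree S) (x : Fin n → ZMod 3) (hx : x ∈ S) :
    ∃ H : AddSubgroup (Fin n → ZMod 3),
      (H : Set (Fin n → ZMod 3)) = (-x) +ᵥ S ∧ H.index = 3 ∧ x ∉ H ∧
        S = x +ᵥ (H : Set (Fin n → ZMod 3)) := by
  obtain ⟨-, hsf, hmax⟩ := hS
  have h3 : ∀ g : Fin n → ZMod 3, 3 • g = 0 := ZModModule.char_nsmul_eq_zero 3
  let φ := Pi.evalAddMonoidHom (fun _ => ZMod 3) (⟨0, hn⟩ : Fin n)
  have hcard : 3 * S.ncard = Nat.card (Fin n → ZMod 3) :=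
    le_antisymm (hsf.three_mul_ncard_le h3 hx)
      (three_mul_ncard_preimage_one φ (Function.surjective_eval _) ▸
        Nat.mul_le_mul_left 3 (hmax _ (AddSumFree.preimage_one φ)))
  exact hsf.exists_addSubgroup_index_eq_three h3 hcard hx
end
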